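/- arXiv:1408.7091 — 3 statements merged into one kernel-verified Lean document; each statement's English description precedes it below -/
import Mathlib

section
/- Let G be the free product A ∗ B of two groups A and B, where A and B are both nontrivial, and suppose G is residually finite. Then G has a normal subgroup N of finite index which admits a surjective group homomorphism onto ℤ. (This is the group-theoretic content of Theorem 2.1: for a closed manifold M = X₁ # X₂ of dimension n ≥ 3 with X₁, X₂ not simply connected, π₁(M) is the free product π₁(X₁) ∗ π₁(X₂), and a finite normal covering M̂ → M with first Betti number b₁(M̂) ≥ 1 corresponds exactly to a finite-index normal subgroup N ⊴ π₁(M) with a surjection N → ℤ.) -/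
/-!
Residual finiteness yields maps `α : A → Q₁`, `β : B → Q₂` to finite groups that are nontrivial
on chosen elements `a ≠ 1`, `b ≠ 1`; take `N` to be the kernel of `A ∗ B → P := Q₁ × Q₂`.
Sending `a ↦ (ζ - α a • ζ, α a)` and `b ↦ (0, β b)` defines a homomorphism
`A ∗ B → ℤ^P ⋊ P` (on `A` it is conjugation of `α` by `ζ`), whose first coordinate restricts to
a homomorphism `N → ℤ^P`. For `ζ` the indicator of `1` it does not vanish on the commutator
`⁅a, b⁆ ∈ N`; finally, the image of a nonzero homomorphism to `ℤ` is again infinite cyclic.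
-/

/-- A group `G` is residually finite if for every `g ≠ 1` there is a
normal subgroup of finite index not containing `g`. -/
def IsResiduallyFinite (G : Type*) [Group G] : Prop :=
  ∀ g : G, g ≠ 1 → ∃ N : Subgroup G, N.Normal ∧ N.FiniteIndex ∧ g ∉ N

open Monoid SemidirectProduct
open scoped commutatorElement

theorem MonoidHom.exists_surjective_int_of_ne_one {G : Type*} [Group G]
    {f : G →* Multiplicative ℤ} (hf : f ≠ 1) :
    ∃ g : G →* Multiplicative ℤ, Function.Surjective g := by
  obtain ⟨x, hx⟩ := DFunLike.ne_iff.1 hf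
  have : Infinite f.range :=
    ((infinite_zpowers.2 (mt IsOfFinOrder.eq_one' hx)).mono
      (Subgroup.zpowers_le.2 (f.mem_range.2 ⟨x, rfl⟩))).to_subtype
  exact ⟨(intCyclicMulEquiv.symm : f.range ≃* _).toMonoidHom.comp f.rangeRestrict,
    intCyclicMulEquiv.symm.surjective.comp f.rangeRestrict_surjective⟩

section Translation

variable (P M : Type*) [Group P] [Monoid M]

attribute [local instance] arrowAction arrowMulDistribMulAction in
def translationAut : P →* MulAut (P → M) :=
  MulDistribMulAction.toMulAut P _

variable {P M}

@[simp]
lemma translationAut_apply (p : P) (f : P → M) (x : P) :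
    translationAut P M p f x = f (p⁻¹ * x) := rfl

@[simp]
lemma translationAut_symm_apply (p : P) (f : P → M) (x : P) :
    (translationAut P M p).symm f x = f (p * x) := by
  simpa using congrFun ((translationAut P M p).apply_symm_apply f) (p * x)

end Translation

def SemidirectProduct.leftOnKer {G N P : Type*} [Group G] [Group N] [Group P]
    {φ : P →* MulAut N} (σ : G →* N ⋊[φ] P) : (rightHom.comp σ).ker →* N where
  toFun g := (σ g).left
  map_one' := by simp
  map_mul' g h := by
    have hg : (σ g).right = 1 := g.2
    simp [mul_left, hg]

namespace Monoid.Coprod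

variable {A B P M : Type*} [Group A] [Group B] [Group P]

def twistedLift [Group M] (ζ : P → M) (α : A →* P) (β : B →* P) :
    A ∗ B →* (P → M) ⋊[translationAut P M] P :=
  lift ((MulAut.conj (SemidirectProduct.inl ζ)).toMonoidHom.comp (SemidirectProduct.inr.comp α))
    (SemidirectProduct.inr.comp β)

lemma rightHom_comp_twistedLift [Group M] (ζ : P → M) (α : A →* P) (β : B →* P) :
    rightHom.comp (twistedLift ζ α β) = lift α β := by
  ext <;> simp [twistedLift]

lemma twistedLift_commutator_left [CommGroup M] (ζ : P → M) {α : A →* P} {β : B →* P}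
    {a : A} {b : B} (hab : Commute (α a) (β b)) (x : P) :
    (twistedLift ζ α β ⁅(inl a : A ∗ B), inr b⁆).left x =
      ζ x / ζ ((α a)⁻¹ * x) * (ζ ((β b)⁻¹ * ((α a)⁻¹ * x)) / ζ ((β b)⁻¹ * x)) := by
  have hconj : α a * ((β b)⁻¹ * ((α a)⁻¹ * x)) = (β b)⁻¹ * x := by
    rw [← mul_assoc, hab.inv_right.eq, mul_assoc, mul_inv_cancel_left]
  simp [twistedLift, commutatorElement_def, mul_left, inv_left, hconj, div_eq_mul_inv]

theorem exists_ker_lift_hom_int_ne_one {α : A →* P} {β : B →* P} {a : A} {b : B}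
    (hab : Commute (α a) (β b)) (ha : α a ≠ 1) (hb : β b ≠ 1) :
    ∃ f : (lift α β).ker →* Multiplicative ℤ, f ≠ 1 := by
  classical
  let ζ : P → Multiplicative ℤ := Pi.mulSingle 1 (.ofAdd 1)
  let σ := twistedLift ζ α β
  have hker : (lift α β).ker = (rightHom.comp σ).ker := by rw [rightHom_comp_twistedLift]
  have hmem : ⁅(inl a : A ∗ B), inr b⁆ ∈ (lift α β).ker := by
    simp [MonoidHom.mem_ker, commutatorElement_eq_one_iff_commute, hab]
  refine ⟨(Pi.evalMonoidHom _ 1).comp ((leftOnKer σ).comp (Subgroup.inclusion hker.le)),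
    fun h => ?_⟩
  have h_comm := DFunLike.congr_fun h ⟨_, hmem⟩
  change (σ ⁅(inl a : A ∗ B), inr b⁆).left 1 = 1 at h_comm
  -- the value is `ofAdd (1 + [α a * β b = 1])`, never `1`
  rw [twistedLift_commutator_left ζ hab] at h_comm
  simp [ζ, Pi.mulSingle_apply, ha, hb] at h_comm
  split_ifs at h_comm <;> exact absurd h_comm (by decide)

end Monoid.Coprod

/-- If the free product `A ∗ B` of two nontrivial groups is residually finite,
then it has a finite-index normal subgroup admitting a surjective homomorphism
onto `ℤ`. -/
theorem freeProduct_residuallyFinite_exists_finiteIndex_normal_surj_int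
    (A B : Type*) [Group A] [Group B] [Nontrivial A] [Nontrivial B]
    (hRF : IsResiduallyFinite (Monoid.Coprod A B)) :
    ∃ N : Subgroup (Monoid.Coprod A B), N.Normal ∧ N.FiniteIndex ∧
      ∃ f : N →* Multiplicative ℤ, Function.Surjective f := by
  obtain ⟨a, ha⟩ := exists_ne (1 : A)
  obtain ⟨b, hb⟩ := exists_ne (1 : B)
  obtain ⟨M₁, _, _, haM₁⟩ := hRF _ ((Coprod.inl_injective.ne_iff' (map_one _)).2 ha)
  obtain ⟨M₂, _, _, hbM₂⟩ := hRF _ ((Coprod.inr_injective.ne_iff' (map_one _)).2 hb)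
  let α : A →* (Coprod A B ⧸ M₁) × (Coprod A B ⧸ M₂) :=
    (MonoidHom.inl _ _).comp ((QuotientGroup.mk' M₁).comp Coprod.inl)
  let β : B →* (Coprod A B ⧸ M₁) × (Coprod A B ⧸ M₂) :=
    (MonoidHom.inr _ _).comp ((QuotientGroup.mk' M₂).comp Coprod.inr)
  have hα : α a ≠ 1 := by simpa [α, Prod.ext_iff] using haM₁
  have hβ : β b ≠ 1 := by simpa [β, Prod.ext_iff] using hbM₂
  obtain ⟨f, hf⟩ := Coprod.exists_ker_lift_hom_int_ne_one (MonoidHom.commute_inl_inr _ _) hα hβ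
  exact ⟨_, inferInstance, inferInstance, f.exists_surjective_int_of_ne_one hf⟩
end

section
/- Let (X, μ) be a measure space, let φ, f, s : X → ℝ be measurable functions with f ≥ 0 and f integrable, φ ∈ L²(μ) ∩ L⁶(μ), and s·φ² integrable. Let Y ≥ 0 and m ≥ 0 be real numbers such that Y·‖φ‖²_{L⁶} ≤ ∫_X (8f + s·φ²) dμ and m·‖φ‖²_{L²} ≤ ∫_X (4f + s·φ²) dμ. Then √(Y·m)·‖φ‖²_{L³} ≤ ∫_X (6f + s·φ²) dμ. -/
/-!
Hölder's inequality for `|φ|^{θp} · |φ|^{(1-θ)q}` with exponents `1/θ` and `1/(1-θ)` makes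
`r ↦ log ∫ |φ|^r` convex; for `p = 6`, `q = 2`, `θ = 1/4` this is `‖φ‖₃² ≤ ‖φ‖₆ ‖φ‖₂`.
Multiplying by `√(Ym)` and using `√(AB) ≤ (A + B)/2` with `A = Y‖φ‖₆²`, `B = m‖φ‖₂²` bounds
the left side by the average of the two hypotheses, and `(8f + sφ²) + (4f + sφ²) = 2(6f + sφ²)`.
-/

open MeasureTheory Real

section Interpolation

variable {X E : Type*} [MeasurableSpace X] {μ : Measure X} [NormedAddCommGroup E]

theorem integral_norm_rpow_convexComb_le {φ : X → E} {p q θ : ℝ} (hp : 0 < p) (hq : 0 < q)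
    (hθ₀ : 0 < θ) (hθ₁ : θ < 1) (hφp : MemLp φ (.ofReal p) μ) (hφq : MemLp φ (.ofReal q) μ) :
    ∫ x, ‖φ x‖ ^ (θ * p + (1 - θ) * q) ∂μ ≤
      (∫ x, ‖φ x‖ ^ p ∂μ) ^ θ * (∫ x, ‖φ x‖ ^ q ∂μ) ^ (1 - θ) := by
  have hθ₁' : 0 < 1 - θ := sub_pos.mpr hθ₁
  have memLp_rpow : ∀ {r t : ℝ}, 0 < r → 0 < t → MemLp φ (.ofReal r) μ →
      MemLp (fun x => ‖φ x‖ ^ (t * r)) (.ofReal t⁻¹) μ := fun {r t} hr ht h => by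
    have := h.norm_rpow_div (.ofReal (t * r))
    rwa [ENNReal.toReal_ofReal (by positivity), ← ENNReal.ofReal_div_of_pos (by positivity),
      div_mul_cancel_right₀ hr.ne'] at this
  have hpq : θ⁻¹.HolderConjugate (1 - θ)⁻¹ :=
    Real.holderConjugate_iff.mpr ⟨one_lt_inv_iff₀.mpr ⟨hθ₀, hθ₁⟩, by simp⟩
  have holder := integral_mul_norm_le_Lp_mul_Lq hpq (memLp_rpow hp hθ₀ hφp)
    (memLp_rpow hq hθ₁' hφq)
  have norm_rpow : ∀ {t r : ℝ} (x : X), ‖‖φ x‖ ^ (t * r)‖ = ‖φ x‖ ^ (t * r) := fun x =>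
    norm_of_nonneg (by positivity)
  have rpow_inv : ∀ {t r : ℝ} (x : X), t ≠ 0 → (‖φ x‖ ^ (t * r)) ^ t⁻¹ = ‖φ x‖ ^ r :=
    fun {t r} x ht => by rw [← rpow_mul (norm_nonneg _), mul_comm t, mul_inv_cancel_right₀ ht]
  simp only [norm_rpow, rpow_inv _ hθ₀.ne', rpow_inv _ hθ₁'.ne', one_div, inv_inv] at holder
  refine (integral_congr_ae (ae_of_all _ fun x => ?_)).trans_le holder
  exact rpow_add' (norm_nonneg _) (by positivity)

theorem integral_abs_pow_three_rpow_two_thirds_le {φ : X → ℝ} (hφ2 : MemLp φ 2 μ)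
    (hφ6 : MemLp φ 6 μ) :
    (∫ x, |φ x| ^ 3 ∂μ) ^ ((2 : ℝ) / 3) ≤
      √((∫ x, |φ x| ^ 6 ∂μ) ^ ((1 : ℝ) / 3) * ∫ x, φ x ^ 2 ∂μ) := by
  set T₃ := ∫ x, |φ x| ^ 3 ∂μ
  set T₆ := ∫ x, |φ x| ^ 6 ∂μ
  set T₂ := ∫ x, φ x ^ 2 ∂μ
  have hT₆ : 0 ≤ T₆ := integral_nonneg fun x => by positivity
  have hT₂ : 0 ≤ T₂ := integral_nonneg fun x => by positivity
  have lyapunov : T₃ ≤ T₆ ^ ((1 : ℝ) / 4) * T₂ ^ ((3 : ℝ) / 4) := by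
    have h := integral_norm_rpow_convexComb_le (p := 6) (q := 2) (θ := 1 / 4) (by norm_num)
      (by norm_num) (by norm_num) (by norm_num) (by simpa using hφ6) (by simpa using hφ2)
    norm_num [Real.norm_eq_abs] at h
    exact h
  calc T₃ ^ ((2 : ℝ) / 3) ≤ (T₆ ^ ((1 : ℝ) / 4) * T₂ ^ ((3 : ℝ) / 4)) ^ ((2 : ℝ) / 3) :=
        rpow_le_rpow (integral_nonneg fun x => by positivity) lyapunov (by norm_num)
    _ = √(T₆ ^ ((1 : ℝ) / 3) * T₂) := by
        rw [sqrt_eq_rpow, mul_rpow (by positivity) hT₂, mul_rpow (by positivity) (by positivity),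
          ← rpow_mul hT₆, ← rpow_mul hT₂, ← rpow_mul hT₆]
        norm_num

end Interpolation

theorem sqrt_mul_mul_sqrt_mul_le {Y m a b A B : ℝ} (hY : 0 ≤ Y) (hm : 0 ≤ m) (ha : 0 ≤ a)
    (hb : 0 ≤ b) (hA : Y * a ≤ A) (hB : m * b ≤ B) : √(Y * m) * √(a * b) ≤ (A + B) / 2 := by
  have hYa : 0 ≤ Y * a := mul_nonneg hY ha
  have hmb : 0 ≤ m * b := mul_nonneg hm hb
  rw [← sqrt_mul (mul_nonneg hY hm), mul_mul_mul_comm, sqrt_mul hYa]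
  nlinarith [sq_nonneg (√(Y * a) - √(m * b)), sq_sqrt hYa, sq_sqrt hmb]

theorem sqrt_interp_sobolev_general {X : Type*} [MeasurableSpace X] (μ : Measure X)
    (φ f s : X → ℝ)
    (hfint : Integrable f μ)
    (hφ2 : MemLp φ 2 μ) (hφ6 : MemLp φ 6 μ)
    (hsφ : Integrable (fun x => s x * φ x ^ 2) μ)
    (Y m : ℝ) (hY : 0 ≤ Y) (hm : 0 ≤ m)
    (hY6 : Y * (∫ x, |φ x| ^ 6 ∂μ) ^ ((1 : ℝ) / 3) ≤ ∫ x, (8 * f x + s x * φ x ^ 2) ∂μ)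
    (hm2 : m * (∫ x, φ x ^ 2 ∂μ) ≤ ∫ x, (4 * f x + s x * φ x ^ 2) ∂μ) :
    Real.sqrt (Y * m) * (∫ x, |φ x| ^ 3 ∂μ) ^ ((2 : ℝ) / 3) ≤
      ∫ x, (6 * f x + s x * φ x ^ 2) ∂μ := by
  have integrable (c : ℝ) : Integrable (fun x => c * f x + s x * φ x ^ 2) μ :=
    (hfint.const_mul c).add hsφ
  have average : (∫ x, (8 * f x + s x * φ x ^ 2) ∂μ) + ∫ x, (4 * f x + s x * φ x ^ 2) ∂μ =
      2 * ∫ x, (6 * f x + s x * φ x ^ 2) ∂μ := by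
    rw [← integral_add (integrable 8) (integrable 4), ← integral_const_mul]
    exact integral_congr_ae (ae_of_all _ fun x => by ring)
  calc √(Y * m) * (∫ x, |φ x| ^ 3 ∂μ) ^ ((2 : ℝ) / 3)
      ≤ √(Y * m) * √((∫ x, |φ x| ^ 6 ∂μ) ^ ((1 : ℝ) / 3) * ∫ x, φ x ^ 2 ∂μ) :=
        mul_le_mul_of_nonneg_left (integral_abs_pow_three_rpow_two_thirds_le hφ2 hφ6)
          (sqrt_nonneg _)
    _ ≤ ((∫ x, (8 * f x + s x * φ x ^ 2) ∂μ) + ∫ x, (4 * f x + s x * φ x ^ 2) ∂μ) / 2 :=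
        sqrt_mul_mul_sqrt_mul_le hY hm (rpow_nonneg (integral_nonneg fun x => by positivity) _)
          (integral_nonneg fun x => by positivity) hY6 hm2
    _ = ∫ x, (6 * f x + s x * φ x ^ 2) ∂μ := by rw [average]; ring

/-- Interpolation inequality: if `Y ‖φ‖²_{L⁶} ≤ ∫ (8f + sφ²)` and
`m ‖φ‖²_{L²} ≤ ∫ (4f + sφ²)`, then `√(Ym) ‖φ‖²_{L³} ≤ ∫ (6f + sφ²)`. -/
theorem sqrt_interp_sobolev {X : Type*} [MeasurableSpace X] (μ : Measure X)
    (φ f s : X → ℝ) (hφ : Measurable φ) (hf : Measurable f) (hs : Measurable s)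
    (hf0 : ∀ x, 0 ≤ f x) (hfint : Integrable f μ)
    (hφ2 : MemLp φ 2 μ) (hφ6 : MemLp φ 6 μ)
    (hsφ : Integrable (fun x => s x * φ x ^ 2) μ)
    (Y m : ℝ) (hY : 0 ≤ Y) (hm : 0 ≤ m)
    (hY6 : Y * (∫ x, |φ x| ^ 6 ∂μ) ^ ((1 : ℝ) / 3) ≤ ∫ x, (8 * f x + s x * φ x ^ 2) ∂μ)
    (hm2 : m * (∫ x, φ x ^ 2 ∂μ) ≤ ∫ x, (4 * f x + s x * φ x ^ 2) ∂μ) :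
    Real.sqrt (Y * m) * (∫ x, |φ x| ^ 3 ∂μ) ^ ((2 : ℝ) / 3) ≤
      ∫ x, (6 * f x + s x * φ x ^ 2) ∂μ :=
  sqrt_interp_sobolev_general μ φ f s hfint hφ2 hφ6 hsφ Y m hY hm hY6 hm2
end

section
/- Let (X, μ) be a measure space, let φ, f, s : X → ℝ be measurable functions with f ≥ 0 and f integrable, φ ∈ L²(μ) ∩ L⁶(μ), and s·φ² integrable. Let Y ≥ 0 and κ ≥ 0 be real numbers such that s ≥ κ pointwise and Y·‖φ‖²_{L⁶} ≤ ∫_X (8f + s·φ²) dμ. Then Y^{3/4}·κ^{1/4}·‖φ‖²_{L⁴} ≤ ∫_X (6f + s·φ²) dμ. -/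
/-!
Cauchy–Schwarz applied to `|φ|³ · |φ|` gives the interpolation
`‖φ‖²_{L⁴} ≤ ‖φ‖^{3/2}_{L⁶} ‖φ‖^{1/2}_{L²}`. Weighted AM–GM then bounds
`Y^{3/4} κ^{1/4} ‖φ‖²_{L⁴}` by `(3/4) Y ‖φ‖²_{L⁶} + (1/4) κ ‖φ‖²_{L²}`, and the two terms are
controlled by `∫ (8f + sφ²)` and `∫ sφ²` respectively; `(3/4)·8 = 6`.
-/

open MeasureTheory Real

section

variable {α : Type*} [MeasurableSpace α] {μ : Measure α}

theorem integral_mul_le_sqrt_integral_sq_mul_sqrt_integral_sq {g h : α → ℝ}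
    (hg0 : 0 ≤ᵐ[μ] g) (hh0 : 0 ≤ᵐ[μ] h) (hg : MemLp g 2 μ) (hh : MemLp h 2 μ) :
    ∫ x, g x * h x ∂μ ≤ (∫ x, g x ^ 2 ∂μ) ^ ((1 : ℝ) / 2) * (∫ x, h x ^ 2 ∂μ) ^ ((1 : ℝ) / 2) := by
  have := integral_mul_le_Lp_mul_Lq_of_nonneg HolderConjugate.two_two hg0 hh0
    (by simpa using hg) (by simpa using hh)
  simpa only [rpow_two] using this

theorem integral_pow_four_le {φ : α → ℝ} (hφ2 : MemLp φ 2 μ) (hφ6 : MemLp φ 6 μ) :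
    ∫ x, φ x ^ 4 ∂μ ≤ (∫ x, |φ x| ^ 6 ∂μ) ^ ((1 : ℝ) / 2) * (∫ x, φ x ^ 2 ∂μ) ^ ((1 : ℝ) / 2) := by
  have hcube : MemLp (fun x => |φ x| ^ 3) 2 μ := by
    refine (memLp_two_iff_integrable_sq
      ((continuous_abs.pow 3).comp_aestronglyMeasurable hφ6.1)).2 ?_
    simpa [← pow_mul] using hφ6.integrable_norm_pow (p := 6) (by norm_num)
  have := integral_mul_le_sqrt_integral_sq_mul_sqrt_integral_sq
    (.of_forall fun x => by positivity) (.of_forall fun x => abs_nonneg (φ x)) hcube hφ2.abs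
  simpa only [← pow_succ, ← pow_mul, sq_abs, Even.pow_abs (by decide : Even 4)] using this

theorem integral_pow_four_rpow_half_le {φ : α → ℝ} (hφ2 : MemLp φ 2 μ) (hφ6 : MemLp φ 6 μ) :
    (∫ x, φ x ^ 4 ∂μ) ^ ((1 : ℝ) / 2) ≤
      ((∫ x, |φ x| ^ 6 ∂μ) ^ ((1 : ℝ) / 3)) ^ ((3 : ℝ) / 4) * (∫ x, φ x ^ 2 ∂μ) ^ ((1 : ℝ) / 4) := by
  have hI6 : 0 ≤ ∫ x, |φ x| ^ 6 ∂μ := integral_nonneg fun x => by positivity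
  have hI2 : 0 ≤ ∫ x, φ x ^ 2 ∂μ := integral_nonneg fun x => by positivity
  calc (∫ x, φ x ^ 4 ∂μ) ^ ((1 : ℝ) / 2)
      ≤ ((∫ x, |φ x| ^ 6 ∂μ) ^ ((1 : ℝ) / 2) * (∫ x, φ x ^ 2 ∂μ) ^ ((1 : ℝ) / 2))
          ^ ((1 : ℝ) / 2) :=
        rpow_le_rpow (integral_nonneg fun x => by positivity) (integral_pow_four_le hφ2 hφ6)
          (by norm_num)
    _ = _ := by
        rw [mul_rpow (by positivity) (by positivity), ← rpow_mul hI6, ← rpow_mul hI6,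
          ← rpow_mul hI2]
        norm_num

theorem mul_integral_le_integral_mul_of_le {κ : ℝ} {s g : α → ℝ} (hsκ : ∀ x, κ ≤ s x)
    (hg0 : ∀ x, 0 ≤ g x) (hg : Integrable g μ) (hsg : Integrable (fun x => s x * g x) μ) :
    κ * ∫ x, g x ∂μ ≤ ∫ x, s x * g x ∂μ := by
  rw [← integral_const_mul]
  exact integral_mono (hg.const_mul κ) hsg fun x => mul_le_mul_of_nonneg_right (hsκ x) (hg0 x)

end

theorem rpow_interp_sobolev_general {X : Type*} [MeasurableSpace X] (μ : Measure X)
    (φ f s : X → ℝ)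
    (hfint : Integrable f μ)
    (hφ2 : MemLp φ 2 μ) (hφ6 : MemLp φ 6 μ)
    (hsφ : Integrable (fun x => s x * φ x ^ 2) μ)
    (Y κ : ℝ) (hY : 0 ≤ Y) (hκ : 0 ≤ κ) (hsκ : ∀ x, κ ≤ s x)
    (hY6 : Y * (∫ x, |φ x| ^ 6 ∂μ) ^ ((1 : ℝ) / 3) ≤ ∫ x, (8 * f x + s x * φ x ^ 2) ∂μ) :
    Y ^ ((3 : ℝ) / 4) * κ ^ ((1 : ℝ) / 4) * (∫ x, φ x ^ 4 ∂μ) ^ ((1 : ℝ) / 2) ≤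
      ∫ x, (6 * f x + s x * φ x ^ 2) ∂μ := by
  set N6 := (∫ x, |φ x| ^ 6 ∂μ) ^ ((1 : ℝ) / 3)
  set N2 := ∫ x, φ x ^ 2 ∂μ
  have hN6 : 0 ≤ N6 := by positivity
  have hN2 : 0 ≤ N2 := integral_nonneg fun x => by positivity
  have hsplit (c : ℝ) :
      ∫ x, (c * f x + s x * φ x ^ 2) ∂μ = c * ∫ x, f x ∂μ + ∫ x, s x * φ x ^ 2 ∂μ := by
    rw [integral_add (hfint.const_mul c) hsφ, integral_const_mul]
  have hκN2 : κ * N2 ≤ ∫ x, s x * φ x ^ 2 ∂μ :=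
    mul_integral_le_integral_mul_of_le hsκ (fun x => sq_nonneg _) hφ2.integrable_sq hsφ
  rw [hsplit] at hY6 ⊢
  calc Y ^ ((3 : ℝ) / 4) * κ ^ ((1 : ℝ) / 4) * (∫ x, φ x ^ 4 ∂μ) ^ ((1 : ℝ) / 2)
      ≤ Y ^ ((3 : ℝ) / 4) * κ ^ ((1 : ℝ) / 4) * (N6 ^ ((3 : ℝ) / 4) * N2 ^ ((1 : ℝ) / 4)) := by
        gcongr
        exact integral_pow_four_rpow_half_le hφ2 hφ6
    _ = (Y * N6) ^ ((3 : ℝ) / 4) * (κ * N2) ^ ((1 : ℝ) / 4) := by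
        rw [mul_rpow hY hN6, mul_rpow hκ hN2]
        ring
    _ ≤ 3 / 4 * (Y * N6) + 1 / 4 * (κ * N2) :=
        geom_mean_le_arith_mean2_weighted (by norm_num) (by norm_num) (by positivity)
          (by positivity) (by norm_num)
    _ ≤ 3 / 4 * (8 * ∫ x, f x ∂μ + ∫ x, s x * φ x ^ 2 ∂μ) + 1 / 4 * ∫ x, s x * φ x ^ 2 ∂μ := by
        gcongr
    _ = 6 * ∫ x, f x ∂μ + ∫ x, s x * φ x ^ 2 ∂μ := by ring

/-- Interpolation inequality: if `s ≥ κ ≥ 0` pointwise and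
`Y ‖φ‖²_{L⁶} ≤ ∫ (8f + sφ²)`, then `Y^{3/4} κ^{1/4} ‖φ‖²_{L⁴} ≤ ∫ (6f + sφ²)`. -/
theorem rpow_interp_sobolev {X : Type*} [MeasurableSpace X] (μ : Measure X)
    (φ f s : X → ℝ) (hφ : Measurable φ) (hf : Measurable f) (hs : Measurable s)
    (hf0 : ∀ x, 0 ≤ f x) (hfint : Integrable f μ)
    (hφ2 : MemLp φ 2 μ) (hφ6 : MemLp φ 6 μ)
    (hsφ : Integrable (fun x => s x * φ x ^ 2) μ)
    (Y κ : ℝ) (hY : 0 ≤ Y) (hκ : 0 ≤ κ) (hsκ : ∀ x, κ ≤ s x)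
    (hY6 : Y * (∫ x, |φ x| ^ 6 ∂μ) ^ ((1 : ℝ) / 3) ≤ ∫ x, (8 * f x + s x * φ x ^ 2) ∂μ) :
    Y ^ ((3 : ℝ) / 4) * κ ^ ((1 : ℝ) / 4) * (∫ x, φ x ^ 4 ∂μ) ^ ((1 : ℝ) / 2) ≤
      ∫ x, (6 * f x + s x * φ x ^ 2) ∂μ :=
  rpow_interp_sobolev_general μ φ f s hfint hφ2 hφ6 hsφ Y κ hY hκ hsκ hY6
end
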